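/- arXiv:2112.02179 — 3 statements merged into one kernel-verified Lean document; each statement's English description precedes it below -/
import Mathlib

section
/- Let x₁,...,x_n ∈ R^d be nonzero vectors, α₁,...,α_n ∈ R scalars, and h_{∥,i}, h_{⊥,i} > 0 weights. Define M = Σ_i [α_i²(h_{∥,i} - h_{⊥,i})/‖x_i‖² · x_i x_i^T + α_i² h_{⊥,i} I]. If M is invertible, then c* = M^{-1} Σ_i α_i h_{∥,i} x_i is the unique minimizer of c ↦ Σ_i h_{∥,i}‖r_∥(x_i, α_i c)‖² + h_{⊥,i}‖r_⊥(x_i, α_i c)‖², where r_∥(x, y) = x - (⟨x,y⟩/‖x‖²)x and r_⊥(x, y) = (⟨x,y⟩/‖x‖²)x - y. -/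
/-- Parallel residual `r_∥(x, y) = x - (⟨x,y⟩/‖x‖²)x`. -/
noncomputable def rpar {d : ℕ} (x y : EuclideanSpace ℝ (Fin d)) : EuclideanSpace ℝ (Fin d) :=
  x - ((inner ℝ x y : ℝ) / ‖x‖ ^ 2) • x

/-- Orthogonal residual `r_⊥(x, y) = (⟨x,y⟩/‖x‖²)x - y`. -/
noncomputable def rperp {d : ℕ} (x y : EuclideanSpace ℝ (Fin d)) : EuclideanSpace ℝ (Fin d) :=
  ((inner ℝ x y : ℝ) / ‖x‖ ^ 2) • x - y

/-- The anisotropic clustering loss for points `x i`, scalings `α i`, weights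
`h_{∥,i}, h_{⊥,i}`, with center `c`. -/
noncomputable def anisoLoss {n d : ℕ} (x : Fin n → EuclideanSpace ℝ (Fin d))
    (α hpar hperp : Fin n → ℝ) (c : EuclideanSpace ℝ (Fin d)) : ℝ :=
  ∑ i, (hpar i * ‖rpar (x i) (α i • c)‖ ^ 2 + hperp i * ‖rperp (x i) (α i • c)‖ ^ 2)

/-!
Expanding both residuals, the loss is the quadratic `c ↦ cᵀ M c - 2 ⟪b, c⟫ + const` with
`b = Σ α_i h_{∥,i} x_i`, and `M` is positive semidefinite because `h_{∥,i} ≥ h_{⊥,i} ≥ 0`.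
Being invertible, `M` is then positive definite, and completing the square at the solution `c*`
of the normal equation `M c* = b` gives `L(c) = L(c*) + (c - c*)ᵀ M (c - c*) > L(c*)` for
`c ≠ c*`.
-/

open Matrix

section Quadratic

variable {ι : Type*} [Fintype ι] {A : Matrix ι ι ℝ} {b c₀ : ι → ℝ}

lemma Matrix.IsHermitian.quadratic_eq_add_of_mulVec_eq (hA : A.IsHermitian) (hc₀ : A *ᵥ c₀ = b)
    (c : ι → ℝ) :
    c ⬝ᵥ A *ᵥ c - 2 * (b ⬝ᵥ c) =
      c₀ ⬝ᵥ A *ᵥ c₀ - 2 * (b ⬝ᵥ c₀) + (c - c₀) ⬝ᵥ A *ᵥ (c - c₀) := by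
  have hsymm : c₀ ⬝ᵥ A *ᵥ c = c ⬝ᵥ A *ᵥ c₀ := by
    rw [dotProduct_mulVec, ← mulVec_transpose, dotProduct_comm,
      ← conjTranspose_eq_transpose_of_trivial, hA.eq]
  simp only [mulVec_sub, dotProduct_sub, sub_dotProduct, ← hc₀, dotProduct_comm (A *ᵥ c₀), hsymm]
  ring

lemma Matrix.PosDef.quadratic_lt_of_ne (hA : A.PosDef) (hc₀ : A *ᵥ c₀ = b) {c : ι → ℝ}
    (hc : c ≠ c₀) :
    c₀ ⬝ᵥ A *ᵥ c₀ - 2 * (b ⬝ᵥ c₀) < c ⬝ᵥ A *ᵥ c - 2 * (b ⬝ᵥ c) := by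
  have hpos := hA.dotProduct_mulVec_pos (sub_ne_zero.mpr hc)
  rw [star_trivial] at hpos
  rw [hA.isHermitian.quadratic_eq_add_of_mulVec_eq hc₀ c]
  linarith

end Quadratic

section AnisotropicLoss

variable {n d : ℕ}

lemma mul_norm_rpar_sq_add_mul_norm_rperp_sq (x c : EuclideanSpace ℝ (Fin d)) (a p q : ℝ) :
    p * ‖rpar x (a • c)‖ ^ 2 + q * ‖rperp x (a • c)‖ ^ 2 =
      a ^ 2 * (p - q) / ‖x‖ ^ 2 * inner ℝ x c ^ 2 + a ^ 2 * q * ‖c‖ ^ 2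
        - 2 * (a * p) * inner ℝ x c + p * ‖x‖ ^ 2 := by
  obtain ⟨s, hs_def⟩ : ∃ s, s = a * inner ℝ x c / ‖x‖ ^ 2 := ⟨_, rfl⟩
  -- also for `x = 0`, where `s = 0` by the convention `t / 0 = 0` and `inner ℝ x c = 0`
  have hs : s * ‖x‖ ^ 2 = a * inner ℝ x c := by
    rcases eq_or_ne x 0 with rfl | hx
    · simp
    · rw [hs_def]
      exact div_mul_cancel₀ _ (by positivity)
  have hpar : ‖rpar x (a • c)‖ ^ 2 = (1 - s) ^ 2 * ‖x‖ ^ 2 := by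
    have hrpar : rpar x (a • c) = (1 - s) • x := by
      rw [rpar, real_inner_smul_right, ← hs_def, sub_smul, one_smul]
    rw [hrpar, norm_smul, mul_pow, Real.norm_eq_abs, sq_abs]
  have hperp : ‖rperp x (a • c)‖ ^ 2 =
      s ^ 2 * ‖x‖ ^ 2 - 2 * s * (a * inner ℝ x c) + a ^ 2 * ‖c‖ ^ 2 := by
    rw [rperp, real_inner_smul_right, ← hs_def, norm_sub_sq_real, real_inner_smul_left,
      real_inner_smul_right, norm_smul, norm_smul, mul_pow, mul_pow, Real.norm_eq_abs,
      Real.norm_eq_abs, sq_abs, sq_abs]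
    ring
  rw [hpar, hperp]
  linear_combination (-2 * p + (p + q) * s) * hs + (p - q) * a * inner ℝ x c * hs_def

noncomputable def anisoMatrix (x : Fin n → EuclideanSpace ℝ (Fin d)) (α hpar hperp : Fin n → ℝ) :
    Matrix (Fin d) (Fin d) ℝ :=
  ∑ i, (((α i) ^ 2 * (hpar i - hperp i) / ‖x i‖ ^ 2) • vecMulVec (x i).ofLp (x i).ofLp +
    ((α i) ^ 2 * hperp i) • (1 : Matrix (Fin d) (Fin d) ℝ))

variable (x : Fin n → EuclideanSpace ℝ (Fin d)) (α hpar hperp : Fin n → ℝ)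

lemma dotProduct_anisoMatrix_mulVec (c : EuclideanSpace ℝ (Fin d)) :
    c.ofLp ⬝ᵥ anisoMatrix x α hpar hperp *ᵥ c.ofLp =
      ∑ i, ((α i) ^ 2 * (hpar i - hperp i) / ‖x i‖ ^ 2 * inner ℝ (x i) c ^ 2 +
        (α i) ^ 2 * hperp i * ‖c‖ ^ 2) := by
  simp only [anisoMatrix, sum_mulVec, add_mulVec, smul_mulVec, one_mulVec, vecMulVec_mulVec,
    dotProduct_sum, dotProduct_add, dotProduct_smul, op_smul_eq_mul, smul_eq_mul,
    ← real_inner_self_eq_norm_sq c, EuclideanSpace.inner_eq_star_dotProduct, star_trivial]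
  refine Finset.sum_congr rfl fun i _ => ?_
  rw [dotProduct_comm (x i).ofLp c.ofLp]
  ring

lemma anisoLoss_eq_quadratic (c : EuclideanSpace ℝ (Fin d)) :
    anisoLoss x α hpar hperp c =
      c.ofLp ⬝ᵥ anisoMatrix x α hpar hperp *ᵥ c.ofLp
        - 2 * ((∑ i, (α i * hpar i) • x i).ofLp ⬝ᵥ c.ofLp) + ∑ i, hpar i * ‖x i‖ ^ 2 := by
  have hb : (∑ i, (α i * hpar i) • x i).ofLp ⬝ᵥ c.ofLp = ∑ i, α i * hpar i * inner ℝ (x i) c := by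
    simp only [WithLp.ofLp_sum, WithLp.ofLp_smul, sum_dotProduct, smul_dotProduct, smul_eq_mul,
      EuclideanSpace.inner_eq_star_dotProduct, star_trivial, dotProduct_comm c.ofLp]
  rw [anisoLoss, dotProduct_anisoMatrix_mulVec, hb, Finset.mul_sum, ← Finset.sum_sub_distrib,
    ← Finset.sum_add_distrib]
  refine Finset.sum_congr rfl fun i _ => ?_
  rw [mul_norm_rpar_sq_add_mul_norm_rperp_sq]
  ring

lemma posSemidef_anisoMatrix (h0 : ∀ i, 0 ≤ hperp i) (hle : ∀ i, hperp i ≤ hpar i) :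
    (anisoMatrix x α hpar hperp).PosSemidef := by
  refine posSemidef_sum _ fun i _ => .add (.smul ?_ ?_) (.smul .one (mul_nonneg (sq_nonneg _) (h0 i)))
  · simpa only [star_trivial] using posSemidef_vecMulVec_self_star (x i).ofLp
  · exact div_nonneg (mul_nonneg (sq_nonneg _) (sub_nonneg.2 (hle i))) (sq_nonneg _)

end AnisotropicLoss

theorem stmt11_general {n d : ℕ} (x : Fin n → EuclideanSpace ℝ (Fin d)) (α hpar hperp : Fin n → ℝ)
    (hpq : ∀ i, 0 < hperp i ∧ hperp i ≤ hpar i)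
    (M : Matrix (Fin d) (Fin d) ℝ)
    (hM : M = ∑ i, (((α i) ^ 2 * (hpar i - hperp i) / ‖x i‖ ^ 2) •
          Matrix.of (fun a b => x i a * x i b) +
        ((α i) ^ 2 * hperp i) • (1 : Matrix (Fin d) (Fin d) ℝ)))
    (hinv : IsUnit M.det)
    (cstar : EuclideanSpace ℝ (Fin d))
    (hcstar : ∀ a : Fin d,
      cstar a = M⁻¹.mulVec (fun b => (∑ i, (α i * hpar i) • x i) b) a) :
    (∀ c : EuclideanSpace ℝ (Fin d),
        anisoLoss x α hpar hperp cstar ≤ anisoLoss x α hpar hperp c) ∧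
      ∀ c : EuclideanSpace ℝ (Fin d),
        anisoLoss x α hpar hperp c = anisoLoss x α hpar hperp cstar → c = cstar := by
  obtain rfl : M = anisoMatrix x α hpar hperp := hM
  have hposDef : (anisoMatrix x α hpar hperp).PosDef :=
    (posSemidef_anisoMatrix x α hpar hperp (fun i => (hpq i).1.le) fun i => (hpq i).2)
      |>.posDef_iff_isUnit.mpr ((isUnit_iff_isUnit_det _).mpr hinv)
  have hnormal : anisoMatrix x α hpar hperp *ᵥ cstar.ofLp = (∑ i, (α i * hpar i) • x i).ofLp := by
    rw [show cstar.ofLp = _ from funext hcstar, mulVec_mulVec, mul_nonsing_inv _ hinv,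
      one_mulVec]
  have hlt : ∀ c ≠ cstar, anisoLoss x α hpar hperp cstar < anisoLoss x α hpar hperp c := by
    intro c hc
    simp only [anisoLoss_eq_quadratic]
    linarith [hposDef.quadratic_lt_of_ne hnormal (WithLp.ofLp_injective 2 |>.ne hc)]
  refine ⟨fun c => ?_, fun c hc => by_contra fun hne => (hlt c hne).ne' hc⟩
  rcases eq_or_ne c cstar with rfl | hne
  exacts [le_rfl, (hlt c hne).le]

/-- With `M = Σ_i [α_i²(h_{∥,i} - h_{⊥,i})/‖x_i‖² x_i x_iᵀ + α_i² h_{⊥,i} I]`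
invertible, `c* = M⁻¹ Σ_i α_i h_{∥,i} x_i` is the unique minimizer of the anisotropic
projective clustering loss. -/
theorem stmt11 {n d : ℕ} (x : Fin n → EuclideanSpace ℝ (Fin d)) (α hpar hperp : Fin n → ℝ)
    (hx : ∀ i, x i ≠ 0) (hpq : ∀ i, 0 < hperp i ∧ hperp i ≤ hpar i)
    (M : Matrix (Fin d) (Fin d) ℝ)
    (hM : M = ∑ i, (((α i) ^ 2 * (hpar i - hperp i) / ‖x i‖ ^ 2) •
          Matrix.of (fun a b => x i a * x i b) +
        ((α i) ^ 2 * hperp i) • (1 : Matrix (Fin d) (Fin d) ℝ)))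
    (hinv : IsUnit M.det)
    (cstar : EuclideanSpace ℝ (Fin d))
    (hcstar : ∀ a : Fin d,
      cstar a = M⁻¹.mulVec (fun b => (∑ i, (α i * hpar i) • x i) b) a) :
    (∀ c : EuclideanSpace ℝ (Fin d),
        anisoLoss x α hpar hperp cstar ≤ anisoLoss x α hpar hperp c) ∧
      ∀ c : EuclideanSpace ℝ (Fin d),
        anisoLoss x α hpar hperp c = anisoLoss x α hpar hperp cstar → c = cstar :=
  stmt11_general x α hpar hperp hpq M hM hinv cstar hcstar
end

section
/- The projective k-clustering objective satisfies: min over centers c_1,...,c_k ≠ 0 of Σ_{i=1}^n min_{j∈[k]} ‖x_i - (⟨x_i,c_j⟩/‖c_j‖²)c_j‖² = ‖X‖_F² - max over partitions X_1,...,X_k of the rows of X of Σ_{j=1}^k σ₁(X_j)², where σ₁(X_j) is the top singular value of the submatrix X_j. -/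
/-!
Normalising each center to a unit vector `u_j`, the residual of `x_i` against `c_j` is
`‖x_i‖² - ⟪x_i, u_j⟫²`, so the objective is `‖X‖_F² - Σ_i max_j ⟪x_i, u_j⟫²`. It remains
to maximise `Σ_i ⟪x_i, u_{g i}⟫²` jointly over the unit vectors `u` and the assignments `g`, and
the two maximisations commute: for fixed `u` the best `g` sends each point to a center maximising
`⟪x_i, u_j⟫²`, while for fixed `g` the best `u_j` is a top right singular vector of the part `X_j`,
contributing `σ₁(X_j)²`.
-/

open Finset Set
open scoped RealInnerProductSpace

section Order

variable {ι κ α : Type*} [ConditionallyCompleteLinearOrder α]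

lemma ciSup_eq_of_forall_le {f : ι → α} {i : ι} (h : ∀ j, f j ≤ f i) : ⨆ j, f j = f i :=
  haveI : Nonempty ι := ⟨i⟩
  ciSup_eq_of_forall_le_of_forall_lt_exists_gt h fun _ hw => ⟨i, hw⟩

lemma ciSup_comm_of_bddAbove {f : ι → κ → α} (hf : BddAbove (range fun p : ι × κ => f p.1 p.2)) :
    ⨆ i, ⨆ j, f i j = ⨆ j, ⨆ i, f i j := by
  have hf' : BddAbove (range fun p : κ × ι => f p.2 p.1) := by
    rwa [← (Equiv.prodComm κ ι).surjective.range_comp] at hf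
  rw [← ciSup_prod hf, ← ciSup_prod hf', ← (Equiv.prodComm κ ι).surjective.iSup_comp]
  rfl

end Order

section Real

variable {ι κ V : Type*}

lemma ciInf_const_sub [Nonempty ι] {f : ι → ℝ} (hf : BddAbove (range f)) (a : ℝ) :
    ⨅ i, (a - f i) = a - ⨆ i, f i := by
  have hbdd : BddBelow (range fun i => a - f i) := by
    obtain ⟨M, hM⟩ := hf
    exact ⟨a - M, by rintro _ ⟨i, rfl⟩; linarith [hM ⟨i, rfl⟩]⟩
  refine le_antisymm ?_ (le_ciInf fun i => sub_le_sub_left (le_ciSup hf i) a)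
  rw [le_sub_comm]
  exact ciSup_le fun i => by linarith [ciInf_le hbdd i]

lemma sum_ciSup_eq_ciSup_sum [Fintype κ] (f : κ → V → ℝ) (hf : ∀ j, ∃ v, ∀ w, f j w ≤ f j v) :
    ∑ j, ⨆ v, f j v = ⨆ u : κ → V, ∑ j, f j (u j) := by
  choose u hu using hf
  rw [ciSup_eq_of_forall_le (i := u) fun w => sum_le_sum fun j _ => hu j (w j)]
  exact sum_congr rfl fun j _ => ciSup_eq_of_forall_le (hu j)

lemma sum_fiberwise_comp {M : Type*} [AddCommMonoid M] [Fintype ι] [Fintype κ] [DecidableEq κ]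
    (g : ι → κ) (f : κ → ι → M) :
    ∑ j, ∑ i ∈ univ.filter (fun i => g i = j), f j i = ∑ i, f (g i) i := by
  rw [← sum_fiberwise univ g fun i => f (g i) i]
  refine sum_congr rfl fun j _ => sum_congr rfl fun i hi => ?_
  rw [(mem_filter.1 hi).2]

end Real

section Geometry

variable {E : Type*} [NormedAddCommGroup E] [InnerProductSpace ℝ E]

lemma norm_sub_inner_div_smul_sq (x c : E) :
    ‖x - (⟪x, c⟫ / ‖c‖ ^ 2) • c‖ ^ 2 = ‖x‖ ^ 2 - ⟪x, ‖c‖⁻¹ • c⟫ ^ 2 := by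
  rcases eq_or_ne c 0 with rfl | hc
  · simp
  have hcn : ‖c‖ ≠ 0 := norm_ne_zero_iff.2 hc
  rw [norm_sub_sq_real, real_inner_smul_right, norm_smul, real_inner_smul_right,
    Real.norm_eq_abs, mul_pow, sq_abs]
  field_simp
  ring

lemma inner_sq_le_norm_sq {x v : E} (hv : ‖v‖ = 1) : ⟪x, v⟫ ^ 2 ≤ ‖x‖ ^ 2 := by
  simpa [hv] using
    sq_le_sq.2 ((abs_real_inner_le_norm x v).trans_eq (abs_of_nonneg (by positivity)).symm)

lemma exists_norm_eq_one_forall_le [FiniteDimensional ℝ E] [Nontrivial E] {f : E → ℝ}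
    (hf : Continuous f) : ∃ v : {v : E // ‖v‖ = 1}, ∀ w : {v : E // ‖v‖ = 1}, f w ≤ f v := by
  obtain ⟨v, hv, hmax⟩ := (isCompact_sphere (0 : E) 1).exists_isMaxOn
    (NormedSpace.sphere_nonempty.2 zero_le_one) hf.continuousOn
  exact ⟨⟨v, mem_sphere_zero_iff_norm.1 hv⟩, fun w => hmax (mem_sphere_zero_iff_norm.2 w.2)⟩

end Geometry

noncomputable section Clustering

variable {E ι κ : Type*} [NormedAddCommGroup E] [InnerProductSpace ℝ E] [Fintype ι]
  (x : ι → E)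

def projectiveCost (c : κ → E) : ℝ :=
  ∑ i, ⨅ j, ‖x i - (⟪x i, c j⟫ / ‖c j‖ ^ 2) • c j‖ ^ 2

def capturedEnergy (u : κ → {v : E // ‖v‖ = 1}) : ℝ :=
  ∑ i, ⨆ j, ⟪x i, (u j : E)⟫ ^ 2

/-- `Σ_j σ₁(X_j)²`, where `X_j` consists of the rows `x i` with `g i = j`. -/
def partitionEnergy [Fintype κ] [DecidableEq κ] (g : ι → κ) : ℝ :=
  ∑ j, ⨆ v : {v : E // ‖v‖ = 1}, ∑ i ∈ univ.filter (fun i => g i = j), ⟪x i, (v : E)⟫ ^ 2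

variable {x}

lemma projectiveCost_eq_sub_capturedEnergy [Finite κ] [Nonempty κ] {c : κ → E}
    (hc : ∀ j, c j ≠ 0) :
    projectiveCost x c =
      ∑ i, ‖x i‖ ^ 2 - capturedEnergy x fun j => ⟨‖c j‖⁻¹ • c j, norm_smul_inv_norm (hc j)⟩ := by
  rw [projectiveCost, capturedEnergy, ← sum_sub_distrib]
  refine sum_congr rfl fun i _ => ?_
  simp_rw [norm_sub_inner_div_smul_sq]
  exact ciInf_const_sub (Set.finite_range _).bddAbove _

lemma capturedEnergy_eq_ciSup [Finite κ] [Nonempty κ] (u : κ → {v : E // ‖v‖ = 1}) :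
    capturedEnergy x u = ⨆ g : ι → κ, ∑ i, ⟪x i, (u (g i) : E)⟫ ^ 2 :=
  sum_ciSup_eq_ciSup_sum (fun i j => ⟪x i, (u j : E)⟫ ^ 2) fun _ => Finite.exists_max _

lemma partitionEnergy_eq_ciSup [Fintype κ] [DecidableEq κ] [FiniteDimensional ℝ E]
    [Nontrivial E] (g : ι → κ) :
    partitionEnergy x g = ⨆ u : κ → {v : E // ‖v‖ = 1}, ∑ i, ⟪x i, (u (g i) : E)⟫ ^ 2 := by
  rw [partitionEnergy, sum_ciSup_eq_ciSup_sum]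
  · exact iSup_congr fun u => sum_fiberwise_comp g fun j i => ⟪x i, (u j : E)⟫ ^ 2
  · exact fun j => exists_norm_eq_one_forall_le <|
      continuous_finsetSum _ fun i _ => (continuous_const.inner continuous_id).pow 2

lemma ciSup_capturedEnergy [Fintype κ] [Nonempty κ] [DecidableEq κ] [FiniteDimensional ℝ E]
    [Nontrivial E] :
    ⨆ u : κ → {v : E // ‖v‖ = 1}, capturedEnergy x u = ⨆ g : ι → κ, partitionEnergy x g := by
  simp_rw [capturedEnergy_eq_ciSup, partitionEnergy_eq_ciSup]
  refine ciSup_comm_of_bddAbove ⟨∑ i, ‖x i‖ ^ 2, ?_⟩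
  rintro _ ⟨⟨u, g⟩, rfl⟩
  exact sum_le_sum fun i _ => inner_sq_le_norm_sq (u (g i)).2

lemma capturedEnergy_le [Nonempty κ] (u : κ → {v : E // ‖v‖ = 1}) :
    capturedEnergy x u ≤ ∑ i, ‖x i‖ ^ 2 :=
  sum_le_sum fun _ _ => ciSup_le fun j => inner_sq_le_norm_sq (u j).2

lemma ciInf_projectiveCost [Finite κ] [Nonempty κ] [Nontrivial E] :
    ⨅ c : {c : κ → E // ∀ j, c j ≠ 0}, projectiveCost x c.1 =
      ∑ i, ‖x i‖ ^ 2 - ⨆ u : κ → {v : E // ‖v‖ = 1}, capturedEnergy x u := by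
  set normalize : {c : κ → E // ∀ j, c j ≠ 0} → κ → {v : E // ‖v‖ = 1} :=
    fun c j => ⟨‖c.1 j‖⁻¹ • c.1 j, norm_smul_inv_norm (c.2 j)⟩
  have hnormalize : normalize.Surjective := fun u =>
    ⟨⟨fun j => u j, fun j => norm_ne_zero_iff.1 (by simp [(u j).2])⟩,
      funext fun j => Subtype.ext (by simp [normalize, (u j).2])⟩
  have : Nonempty {v : E // ‖v‖ = 1} := nonempty_subtype.2 (exists_norm_eq E zero_le_one)
  have := hnormalize.nonempty
  calc ⨅ c : {c : κ → E // ∀ j, c j ≠ 0}, projectiveCost x c.1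
      = ⨅ c, (∑ i, ‖x i‖ ^ 2 - capturedEnergy x (normalize c)) :=
        iInf_congr fun c => projectiveCost_eq_sub_capturedEnergy c.2
    _ = ∑ i, ‖x i‖ ^ 2 - ⨆ c, capturedEnergy x (normalize c) :=
        ciInf_const_sub ⟨_, forall_mem_range.2 fun c => capturedEnergy_le _⟩ _
    _ = ∑ i, ‖x i‖ ^ 2 - ⨆ u, capturedEnergy x u := by rw [hnormalize.iSup_comp]

variable (x) in
theorem ciInf_projectiveCost_eq_sub_ciSup_partitionEnergy [Fintype κ] [Nonempty κ]
    [DecidableEq κ] [FiniteDimensional ℝ E] [Nontrivial E] :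
    ⨅ c : {c : κ → E // ∀ j, c j ≠ 0}, projectiveCost x c.1 =
      ∑ i, ‖x i‖ ^ 2 - ⨆ g : ι → κ, partitionEnergy x g := by
  rw [ciInf_projectiveCost, ciSup_capturedEnergy]

end Clustering

/-- The projective `k`-clustering objective: the infimum over nonzero centers
`c_1, …, c_k` of `Σ_i min_j ‖x_i - (⟨x_i,c_j⟩/‖c_j‖²)c_j‖²` equals
`‖X‖_F² - max over partitions (assignments g) of Σ_j σ₁(X_j)²`, where
`σ₁(X_j)² = sup_{‖v‖=1} Σ_{i : g i = j} ⟨x_i, v⟩²`. -/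
theorem stmt16 {n d k : ℕ} (hd : 0 < d) (hk : 0 < k)
    (x : Fin n → EuclideanSpace ℝ (Fin d)) :
    (⨅ c : {c : Fin k → EuclideanSpace ℝ (Fin d) // ∀ j, c j ≠ 0},
        ∑ i, ⨅ j : Fin k, ‖x i - ((inner ℝ (x i) (c.1 j) : ℝ) / ‖c.1 j‖ ^ 2) • c.1 j‖ ^ 2) =
      ∑ i, ‖x i‖ ^ 2 -
        ⨆ g : Fin n → Fin k, ∑ j,
          ⨆ v : {v : EuclideanSpace ℝ (Fin d) // ‖v‖ = 1},
            ∑ i ∈ Finset.univ.filter (fun i => g i = j), (inner ℝ (x i) v.1 : ℝ) ^ 2 := by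
  have : Nonempty (Fin k) := ⟨⟨0, hk⟩⟩
  have : Nontrivial (EuclideanSpace ℝ (Fin d)) :=
    Module.nontrivial_of_finrank_pos (R := ℝ) (by simpa using hd)
  exact ciInf_projectiveCost_eq_sub_ciSup_partitionEnergy x
end

section
/- Let x ≠ 0, c ≠ 0, h_∥ ≥ h_⊥ > 0, and let α* = h_∥⟨x,c⟩ / ((h_∥-h_⊥)⟨x,c⟩²/‖x‖² + h_⊥‖c‖²) be the optimal anisotropic scaling and α_proj = ⟨x,c⟩/‖c‖² the ordinary projection coefficient. If ⟨x,c⟩ > 0, then α* ≥ α_proj, i.e., the anisotropic optimum pushes the scaled center at least as far from the origin as the orthogonal projection. -/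
/-! By Cauchy–Schwarz `⟨x,c⟩²/‖x‖² ≤ ‖c‖²`, so the denominator of `α*` is at most `h_∥‖c‖²`,
and `α* ≥ h_∥⟨x,c⟩ / (h_∥‖c‖²) = α_proj`. -/

theorem sq_real_inner_div_norm_sq_le {F : Type*} [NormedAddCommGroup F] [InnerProductSpace ℝ F]
    (x c : F) : inner ℝ x c ^ 2 / ‖x‖ ^ 2 ≤ ‖c‖ ^ 2 := by
  have hcs : inner ℝ x c ^ 2 ≤ ‖x‖ ^ 2 * ‖c‖ ^ 2 := by
    rw [← mul_pow, ← sq_abs]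
    exact pow_le_pow_left₀ (abs_nonneg _) (abs_real_inner_le_norm x c) 2
  rcases eq_or_ne x 0 with rfl | hx
  · simp
  · rwa [div_le_iff₀' (by positivity)]

/-- When `C = 0` both sides are `0`, through division by zero. -/
theorem div_le_mul_div_sub_mul_add_mul {s a b q C : ℝ} (hs : 0 ≤ s) (hb : 0 < b) (hba : b ≤ a)
    (hq : 0 ≤ q) (hqC : q ≤ C) : s / C ≤ a * s / ((a - b) * q + b * C) := by
  rcases (hq.trans hqC).eq_or_lt with rfl | hC
  · obtain rfl : q = 0 := le_antisymm hqC hq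
    simp
  have hden : (a - b) * q + b * C ≤ a * C := by nlinarith
  calc s / C = a * s / (a * C) := by rw [mul_div_mul_left _ _ (hb.trans_le hba).ne']
    _ ≤ a * s / ((a - b) * q + b * C) :=
      div_le_div_of_nonneg_left (by nlinarith) (by nlinarith) hden

theorem stmt18_general {d : ℕ} (x c : EuclideanSpace ℝ (Fin d))
    (hpar hperp : ℝ) (h1 : 0 < hperp) (h2 : hperp ≤ hpar)
    (hip : 0 < (inner ℝ x c : ℝ)) :
    (inner ℝ x c : ℝ) / ‖c‖ ^ 2 ≤
      hpar * (inner ℝ x c : ℝ) /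
        ((hpar - hperp) * (inner ℝ x c : ℝ) ^ 2 / ‖x‖ ^ 2 + hperp * ‖c‖ ^ 2) := by
  rw [mul_div_assoc (hpar - hperp)]
  exact div_le_mul_div_sub_mul_add_mul hip.le h1 h2 (by positivity)
    (sq_real_inner_div_norm_sq_le x c)

/-- For `x, c ≠ 0`, `h_∥ ≥ h_⊥ > 0` and `⟨x,c⟩ > 0`, the optimal anisotropic scaling
`α* = h_∥⟨x,c⟩ / ((h_∥-h_⊥)⟨x,c⟩²/‖x‖² + h_⊥‖c‖²)` is at least the projection
coefficient `α_proj = ⟨x,c⟩/‖c‖²`. -/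
theorem stmt18 {d : ℕ} (x c : EuclideanSpace ℝ (Fin d)) (hx : x ≠ 0) (hc : c ≠ 0)
    (hpar hperp : ℝ) (h1 : 0 < hperp) (h2 : hperp ≤ hpar)
    (hip : 0 < (inner ℝ x c : ℝ)) :
    (inner ℝ x c : ℝ) / ‖c‖ ^ 2 ≤
      hpar * (inner ℝ x c : ℝ) /
        ((hpar - hperp) * (inner ℝ x c : ℝ) ^ 2 / ‖x‖ ^ 2 + hperp * ‖c‖ ^ 2) :=
  stmt18_general x c hpar hperp h1 h2 hip
end
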